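/- arXiv:2208.01298 — 3 statements merged into one kernel-verified Lean document; each statement's English description precedes it below -/
import Mathlib

section
/- Let α₁, …, αₙ be patterns over (Σ ∪ Ξ) and let L = ⋂ᵢ L(αᵢ) be the intersection of their erasing pattern languages. Then L = Σ* if and only if ε ∈ L and there exists a letter a ∈ Σ with a ∈ L. -/
/-! A word `[a]` produced by a pattern comes from a single variable occurrence `x` with `σ x = [a]`,
all other occurrences being erased; since `[]` is also produced, the pattern has no terminals.
Sending `x` to an arbitrary word `w` and keeping every variable erased by `σ` erased then
produces `w`. -/

/-- Application of a pattern substitution `σ : Ξ → Σ*` to a pattern over `Σ ∪ Ξ`. -/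
def patApply {A X : Type*} (σ : X → List A) (α : List (A ⊕ X)) : List A :=
  α.flatMap (Sum.elim (fun c => [c]) σ)

/-- The erasing pattern language of a pattern. -/
def patLang {A X : Type*} (α : List (A ⊕ X)) : Set (List A) :=
  {w | ∃ σ : X → List A, patApply σ α = w}

theorem List.exists_of_flatMap_eq_singleton {α β : Type*} {f : α → List β} {l : List α} {b : β}
    (h : l.flatMap f = [b]) :
    ∃ l₁ x l₂, l = l₁ ++ x :: l₂ ∧ l₁.flatMap f = [] ∧ f x = [b] ∧ l₂.flatMap f = [] := by
  induction l with
  | nil => simp at h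
  | cons x xs ih =>
    rw [List.flatMap_cons, List.append_eq_singleton_iff] at h
    rcases h with ⟨hx, hxs⟩ | ⟨hx, hxs⟩
    · obtain ⟨l₁, y, l₂, rfl, h₁, hy, h₂⟩ := ih hxs
      exact ⟨x :: l₁, y, l₂, rfl, by simp [hx, h₁], hy, h₂⟩
    · exact ⟨[], x, xs, rfl, rfl, hx, hxs⟩

section Patterns

variable {A X : Type*}

theorem patApply_eq_nil_of_erases {σ τ : X → List A} {α : List (A ⊕ X)}
    (h : patApply σ α = []) (hτ : ∀ x, σ x = [] → τ x = []) : patApply τ α = [] := by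
  refine List.flatMap_eq_nil_iff.mpr fun s hs => ?_
  have hσs := List.flatMap_eq_nil_iff.mp h s hs
  cases s with
  | inl c => simp at hσs
  | inr x => exact hτ x hσs

theorem patLang_eq_univ_of_nil_mem_of_singleton_mem {α : List (A ⊕ X)} {a : A}
    (h₀ : [] ∈ patLang α) (h₁ : [a] ∈ patLang α) : patLang α = Set.univ := by
  classical
  obtain ⟨σ₀, h₀⟩ := h₀
  obtain ⟨σ, h₁⟩ := h₁
  obtain ⟨β, s, γ, rfl, hβ, hs, hγ⟩ := List.exists_of_flatMap_eq_singleton h₁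
  obtain ⟨x, rfl⟩ : ∃ x, s = .inr x := by
    have := List.flatMap_eq_nil_iff.mp h₀ s (by simp)
    cases s with
    | inl c => simp at this
    | inr x => exact ⟨x, rfl⟩
  refine Set.eq_univ_of_forall fun w => ⟨fun y => if σ y = [] then [] else w, ?_⟩
  have erase : ∀ y, σ y = [] → (if σ y = [] then [] else w) = [] := fun y hy => if_pos hy
  have hβ' := patApply_eq_nil_of_erases (α := β) hβ erase
  have hγ' := patApply_eq_nil_of_erases (α := γ) hγ erase
  simp only [patApply, List.flatMap_append, List.flatMap_cons, Sum.elim_inr] at hβ' hγ' hs ⊢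
  simp [hβ', hγ', hs]

end Patterns

/-- An intersection of erasing pattern languages equals `Σ*` iff it contains the
empty word and some single-letter word. -/
theorem inter_patLang_univ_iff {A X : Type*} [Nonempty A] (n : ℕ)
    (α : Fin n → List (A ⊕ X)) :
    (⋂ i, patLang (α i)) = Set.univ ↔
      ([] ∈ ⋂ i, patLang (α i)) ∧ ∃ a : A, [a] ∈ ⋂ i, patLang (α i) := by
  constructor
  · intro h
    obtain ⟨a⟩ := ‹Nonempty A›
    exact ⟨h ▸ trivial, a, h ▸ trivial⟩
  · rintro ⟨h₀, a, h₁⟩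
    rw [Set.mem_iInter] at h₀ h₁
    exact Set.iInter_eq_univ.mpr fun i =>
      patLang_eq_univ_of_nil_mem_of_singleton_mem (h₀ i) (h₁ i)
end

section
/- Let Σ be an alphabet containing distinct letters a and b. The language L = { w ∈ Σ* : w contains at least one occurrence of a and at least one occurrence of b } is not an erasing pattern language, i.e., there is no pattern α ∈ (Σ ∪ Ξ)* with L(α) = L. -/
open List

section

variable {A X : Type*}

theorem patApply_sublist_patApply {σ τ : X → List A} (h : ∀ x, σ x <+ τ x)
    (α : List (A ⊕ X)) : patApply σ α <+ patApply τ α :=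
  Sublist.flatMap_right α fun c _ => by cases c <;> simp [h]

theorem patApply_erase_sublist_of_mem_patLang {α : List (A ⊕ X)} {w : List A}
    (hw : w ∈ patLang α) : patApply (fun _ => []) α <+ w := by
  obtain ⟨σ, rfl⟩ := hw
  exact patApply_sublist_patApply (fun x => nil_sublist (σ x)) α

theorem List.eq_pair_of_sublist_of_mem {a b : A} (hab : a ≠ b) {t : List A} (h : t <+ [a, b])
    (ha : a ∈ t) (hb : b ∈ t) : t = [a, b] := by
  rcases sublist_cons_iff.mp h with h | ⟨r, rfl, hr⟩
  · rcases sublist_singleton.mp h with rfl | rfl <;> simp_all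
  · rcases sublist_singleton.mp hr with rfl | rfl <;> simp_all

end

/-- The language of words containing at least one `a` and at least one `b`
(for distinct letters `a ≠ b`) is not an erasing pattern language. -/
theorem contains_a_and_b_not_patLang {A X : Type*} (a b : A) (hab : a ≠ b) :
    ¬ ∃ α : List (A ⊕ X), patLang α = {w : List A | a ∈ w ∧ b ∈ w} := by
  rintro ⟨α, hα⟩
  have hsub : ∀ w, a ∈ w → b ∈ w → patApply (fun _ => []) α <+ w := fun w ha hb =>
    patApply_erase_sublist_of_mem_patLang (hα ▸ ⟨ha, hb⟩)
  have hmem : patApply (fun _ => []) α ∈ patLang α := ⟨_, rfl⟩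
  rw [hα] at hmem
  obtain ⟨ha, hb⟩ := hmem
  have ht_ab := List.eq_pair_of_sublist_of_mem hab (hsub [a, b] (by simp) (by simp)) ha hb
  have ht_ba := List.eq_pair_of_sublist_of_mem hab.symm (hsub [b, a] (by simp) (by simp)) hb ha
  exact hab (cons_eq_cons.mp (ht_ab.symm.trans ht_ba)).1
end

section
/- Let T be a tree (a connected acyclic graph) on vertex set {1, …, n}. For all i < j with i, j ∈ {1, …, n}, every vertex lying on the (unique) path from i to j also lies on the path from k to k+1 for some k ∈ {i, i+1, …, j−1}. -/
/-- Auxiliary: walking from `i` to `j = i + m` through consecutive vertices gives a walk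
whose support is covered by consecutive paths. -/
theorem tree_consec_walk {n : ℕ} (G : SimpleGraph (Fin n)) (hG : G.IsTree) :
    ∀ m : ℕ, ∀ i j : Fin n, (i : ℕ) + m = (j : ℕ) →
    ∃ w : G.Walk i j, ∀ v ∈ w.support, v = i ∨
      ∃ k l : Fin n, i ≤ k ∧ k < j ∧ (l : ℕ) = (k : ℕ) + 1 ∧
        ∃ q : G.Walk k l, q.IsPath ∧ v ∈ q.support := by
  intro m
  induction m with
  | zero =>
    intro i j h
    have hije : i = j := Fin.ext (by omega)
    subst hije
    exact ⟨SimpleGraph.Walk.nil, by simp⟩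
  | succ m ih =>
    intro i j h
    have hi' : (i : ℕ) + 1 < n := by
      have := j.isLt; omega
    set i' : Fin n := ⟨(i : ℕ) + 1, hi'⟩ with hi'def
    obtain ⟨w', hw'⟩ := ih i' j (by simp [hi'def]; omega)
    have hq0 : G.Reachable i i' := hG.isConnected.preconnected i i'
    let q0 : G.Walk i i' := hq0.some.bypass
    have hq0p : q0.IsPath := SimpleGraph.Walk.bypass_isPath _
    have hkey : ∃ k l : Fin n, i ≤ k ∧ k < j ∧ (l : ℕ) = (k : ℕ) + 1 ∧
        ∃ q : G.Walk k l, q.IsPath ∧ i' ∈ q.support := by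
      refine ⟨i, i', le_refl _, ?_, rfl, q0, hq0p, SimpleGraph.Walk.end_mem_support _⟩
      rw [Fin.lt_def]; omega
    refine ⟨q0.append w', ?_⟩
    intro v hv
    rw [SimpleGraph.Walk.mem_support_append_iff] at hv
    rcases hv with hv | hv
    · right
      refine ⟨i, i', le_refl _, ?_, rfl, q0, hq0p, hv⟩
      rw [Fin.lt_def]; omega
    · rcases hw' v hv with hv' | ⟨k, l, hk1, hk2, hl, q, hqp, hvq⟩
      · subst hv'
        exact Or.inr hkey
      · have hii' : i ≤ i' := by simp [Fin.le_def, hi'def]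
        exact Or.inr ⟨k, l, le_trans hii' hk1, hk2, hl, q, hqp, hvq⟩

/-- In a tree on `{1, …, n}`, every vertex on the (unique) path from `i` to `j`
(for `i < j`) also lies on the path from `k` to `k+1` for some `i ≤ k < j`. -/
theorem tree_path_covered_by_consecutive {n : ℕ} (G : SimpleGraph (Fin n))
    (hG : G.IsTree) (i j : Fin n) (hij : i < j) (p : G.Walk i j) (hp : p.IsPath)
    (v : Fin n) (hv : v ∈ p.support) :
    ∃ k l : Fin n, i ≤ k ∧ k < j ∧ (l : ℕ) = (k : ℕ) + 1 ∧
      ∃ q : G.Walk k l, q.IsPath ∧ v ∈ q.support := by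
  have hij' : (i : ℕ) < (j : ℕ) := hij
  obtain ⟨w, hw⟩ := tree_consec_walk G hG ((j : ℕ) - (i : ℕ)) i j (by omega)
  -- uniqueness of paths in a tree: p's support is contained in w's support
  obtain ⟨P, -, hP⟩ := hG.existsUnique_path i j
  have h1 : p = P := hP p hp
  have h2 : w.bypass = P := hP w.bypass (SimpleGraph.Walk.bypass_isPath w)
  have hsupp : p.support ⊆ w.support := by
    rw [h1, ← h2]
    exact SimpleGraph.Walk.support_bypass_subset _
  rcases hw v (hsupp hv) with hv' | hres
  · subst hv'
    have hi1 : (v : ℕ) + 1 < n := by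
      have := j.isLt; omega
    set l : Fin n := ⟨(v : ℕ) + 1, hi1⟩ with hl
    have hq : G.Reachable v l := hG.isConnected.preconnected v l
    exact ⟨v, l, le_refl _, hij, rfl, hq.some.bypass,
      SimpleGraph.Walk.bypass_isPath _, SimpleGraph.Walk.start_mem_support _⟩
  · exact hres
end
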